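/- Let Λ be a finite connected triangle-free simplicial graph with at least one edge. Then the underlying complex |RI(S(Λ))| of the reduced intersection complex of the Salvetti complex S(Λ) is a connected simplicial complex; in particular, no collection of vertices spans more than one simplex. -/

import Mathlib

/-!
**Statement 16.**  For a connected triangle-free graph `Λ` with at least one edge,
the underlying complex `|RI(S(Λ))|` of the reduced intersection complex of the
Salvetti complex is a connected simplicial complex: no collection of vertices spans
more than one simplex, and the complex is connected.
-/

noncomputable section

open Metric Pointwise

/-- `W` spans a join subgraph of `Λ`:  the full subgraph on `W` decomposes as a join
`W₁ ∘ W₂` with both parts nonempty (every vertex of `W₁` is adjacent to every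
vertex of `W₂`). -/
def IsJoinSet {V : Type} (Λ : SimpleGraph V) (W : Set V) : Prop :=
  ∃ W₁ W₂ : Set V, W₁.Nonempty ∧ W₂.Nonempty ∧ W₁ ∪ W₂ = W ∧ Disjoint W₁ W₂ ∧
    ∀ v ∈ W₁, ∀ w ∈ W₂, Λ.Adj v w

/-- The (vertex sets of the) maximal join subgraphs of `Λ`. -/
def maxJoinSets {V : Type} (Λ : SimpleGraph V) : Set (Set V) :=
  {W | IsJoinSet Λ W ∧ ∀ W' : Set V, IsJoinSet Λ W' → W ⊆ W' → W' = W}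

/-- `(s, W)` is a simplex of the reduced intersection complex `RI(S(Λ))`: `s` is a
finite nonempty collection of maximal join subgraphs of `Λ` and `W` is a join
subgraph contained in all members of `s` and maximal with this property. -/
def RISCond {V : Type} (Λ : SimpleGraph V) (s : Finset (Set V)) (W : Set V) : Prop :=
  s.Nonempty ∧ (↑s : Set (Set V)) ⊆ maxJoinSets Λ ∧ IsJoinSet Λ W ∧
    (∀ U ∈ s, W ⊆ U) ∧
    ∀ W' : Set V, IsJoinSet Λ W' → (∀ U ∈ s, W' ⊆ U) → W ⊆ W' → W' = W

/-- The vertex graph of `|RI(S(Λ))|`: vertices are the maximal join subgraphs of `Λ`,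
two of them being adjacent when they span an edge of `RI(S(Λ))`, i.e. when their
intersection contains a join subgraph. -/
def joinVertexGraph {V : Type} (Λ : SimpleGraph V) :
    SimpleGraph {W : Set V // W ∈ maxJoinSets Λ} where
  Adj U W := U ≠ W ∧ ∃ J : Set V, IsJoinSet Λ J ∧ J ⊆ U.1 ∧ J ⊆ W.1
  symm := ⟨by
    rintro U W ⟨hne, J, hJ, h1, h2⟩
    exact ⟨hne.symm, J, hJ, h2, h1⟩⟩
  loopless := ⟨fun U h => h.1 rfl⟩

/-!
In a triangle-free graph a join `A ∘ B` is complete bipartite, and a join subgraph `W`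
of it must meet both `A` and `B`: if `W ⊆ A`, any edge of `W` together with a vertex of
`B` would form a triangle. Hence the union of two join subgraphs of a common join is a
join, which forces the maximal join below a collection of maximal joins to be unique.

For connectedness, pick for each vertex `v` a maximal join `star v` containing the
join `{v} ∘ N(v)` of `v` with its neighbours. A maximal join `A ∘ B` with `v ∈ A` shares
the join `{v} ∘ B` with `star v`, so it is adjacent (or equal) to `star v`. In particular
`star v` and `star w` are joined whenever `v ∼ w`, and connectedness of `Λ` connects all
the stars.
-/

theorem SimpleGraph.Reachable.map_of_adj {α β : Type*} {G : SimpleGraph α}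
    {H : SimpleGraph β} (f : α → β) (hf : ∀ a b, G.Adj a b → H.Reachable (f a) (f b))
    {u v : α} (h : G.Reachable u v) : H.Reachable (f u) (f v) := by
  rw [SimpleGraph.reachable_iff_reflTransGen] at h ⊢
  exact Relation.ReflTransGen.lift' f
    (fun a b hab => (H.reachable_iff_reflTransGen _ _).mp (hf a b hab)) _ _ h

section JoinSets

variable {V : Type} {Λ : SimpleGraph V}

theorem isJoinSet_union_of_adj {P Q : Set V} (hP : P.Nonempty) (hQ : Q.Nonempty)
    (h : ∀ v ∈ P, ∀ w ∈ Q, Λ.Adj v w) : IsJoinSet Λ (P ∪ Q) :=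
  ⟨P, Q, hP, hQ, rfl,
    Set.disjoint_left.mpr fun x hxP hxQ => Λ.loopless.irrefl x (h x hxP x hxQ), h⟩

theorem isJoinSet_insert_of_subset_neighborSet {v : V} {S : Set V} (hS : S.Nonempty)
    (hSv : S ⊆ Λ.neighborSet v) :
    IsJoinSet Λ (insert v S) := by
  rw [← Set.singleton_union]
  exact isJoinSet_union_of_adj (Set.singleton_nonempty v) hS fun x hx w hw => hx ▸ hSv hw

theorem isJoinSet_of_subset_union {A B W : Set V} (hAB : ∀ a ∈ A, ∀ b ∈ B, Λ.Adj a b)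
    (hWAB : W ⊆ A ∪ B) (hA : (W ∩ A).Nonempty) (hB : (W ∩ B).Nonempty) :
    IsJoinSet Λ W := by
  rw [← Set.inter_eq_left.mpr hWAB, Set.inter_union_distrib_left]
  exact isJoinSet_union_of_adj hA hB fun v hv w hw => hAB v hv.2 w hw.2

theorem IsJoinSet.nonempty {W : Set V} (hW : IsJoinSet Λ W) : W.Nonempty := by
  obtain ⟨W₁, -, hW₁, -, rfl, -⟩ := hW
  exact hW₁.mono Set.subset_union_left

theorem IsJoinSet.exists_adj_of_mem {W : Set V} (hW : IsJoinSet Λ W) {v : V} (hv : v ∈ W) :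
    ∃ w ∈ W, Λ.Adj v w := by
  obtain ⟨W₁, W₂, ⟨a, ha⟩, ⟨b, hb⟩, rfl, -, hadj⟩ := hW
  rcases hv with hv | hv
  · exact ⟨b, Or.inr hb, hadj v hv b hb⟩
  · exact ⟨a, Or.inl ha, (hadj a ha v hv).symm⟩

theorem IsJoinSet.not_subset_neighborSet (hTF : Λ.CliqueFree 3) {W : Set V}
    (hW : IsJoinSet Λ W) (b : V) : ¬ W ⊆ Λ.neighborSet b := by
  classical
  intro hWb
  obtain ⟨W₁, W₂, ⟨p, hp⟩, ⟨q, hq⟩, rfl, -, hadj⟩ := hW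
  exact hTF {b, p, q} (SimpleGraph.is3Clique_triple_iff.mpr
    ⟨hWb (Or.inl hp), hWb (Or.inr hq), hadj p hp q hq⟩)

theorem IsJoinSet.inter_nonempty_of_subset_union (hTF : Λ.CliqueFree 3) {A B W : Set V}
    (hW : IsJoinSet Λ W) (hWAB : W ⊆ A ∪ B) (hAB : ∀ a ∈ A, ∀ b ∈ B, Λ.Adj a b)
    (hB : B.Nonempty) : (W ∩ B).Nonempty := by
  obtain ⟨b, hb⟩ := hB
  by_contra hWB
  refine hW.not_subset_neighborSet hTF b fun w hw => ?_
  rcases hWAB hw with hwA | hwB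
  · exact (hAB w hwA b hb).symm
  · exact absurd ⟨w, hw, hwB⟩ hWB

theorem IsJoinSet.union_of_subset (hTF : Λ.CliqueFree 3) {U W W' : Set V}
    (hU : IsJoinSet Λ U) (hW : IsJoinSet Λ W) (hWU : W ⊆ U) (hW'U : W' ⊆ U) :
    IsJoinSet Λ (W ∪ W') := by
  obtain ⟨A, B, hA, hB, rfl, -, hAB⟩ := hU
  have hWA : (W ∩ A).Nonempty :=
    hW.inter_nonempty_of_subset_union hTF (Set.union_comm A B ▸ hWU)
      (fun b hb a ha => (hAB a ha b hb).symm) hA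
  have hWB : (W ∩ B).Nonempty := hW.inter_nonempty_of_subset_union hTF hWU hAB hB
  exact isJoinSet_of_subset_union hAB (Set.union_subset hWU hW'U)
    (hWA.mono (Set.inter_subset_inter_left A Set.subset_union_left))
    (hWB.mono (Set.inter_subset_inter_left B Set.subset_union_left))

theorem RISCond.unique (hTF : Λ.CliqueFree 3) {s : Finset (Set V)} {W W' : Set V}
    (h : RISCond Λ s W) (h' : RISCond Λ s W') : W = W' := by
  obtain ⟨⟨U, hU⟩, hs, hW, hWs, hWmax⟩ := h
  obtain ⟨-, -, hW', hW's, hW'max⟩ := h'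
  have hunion : IsJoinSet Λ (W ∪ W') :=
    (hs hU).1.union_of_subset hTF hW (hWs U hU) (hW's U hU)
  have hunion_sub : ∀ U ∈ s, W ∪ W' ⊆ U :=
    fun U hU => Set.union_subset (hWs U hU) (hW's U hU)
  calc W = W ∪ W' := (hWmax _ hunion hunion_sub Set.subset_union_left).symm
    _ = W' := hW'max _ hunion hunion_sub Set.subset_union_right

theorem IsJoinSet.exists_maxJoinSets_superset [Finite V] {J : Set V} (hJ : IsJoinSet Λ J) :
    ∃ M : {W : Set V // W ∈ maxJoinSets Λ}, J ⊆ M.1 := by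
  obtain ⟨M, -, hM⟩ := (Set.toFinite {W : Set V | IsJoinSet Λ W ∧ J ⊆ W}).exists_le_maximal
    (show J ∈ {W | IsJoinSet Λ W ∧ J ⊆ W} from ⟨hJ, subset_rfl⟩)
  exact ⟨⟨M, hM.1.1, fun W' hW' hMW' =>
    (hM.eq_of_le ⟨hW', hM.1.2.trans hMW'⟩ hMW').symm⟩, hM.1.2⟩

theorem joinVertexGraph_reachable_of_subset {M M' : {W : Set V // W ∈ maxJoinSets Λ}}
    {J : Set V} (hJ : IsJoinSet Λ J) (hJM : J ⊆ M.1) (hJM' : J ⊆ M'.1) :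
    (joinVertexGraph Λ).Reachable M M' := by
  by_cases hMM' : M = M'
  · exact hMM' ▸ SimpleGraph.Reachable.refl M
  · exact SimpleGraph.Adj.reachable ⟨hMM', J, hJ, hJM, hJM'⟩

theorem joinVertexGraph_reachable_of_insert_neighborSet_subset
    {M M' : {W : Set V // W ∈ maxJoinSets Λ}} {v : V}
    (hv : v ∈ M.1) (hM' : insert v (Λ.neighborSet v) ⊆ M'.1) :
    (joinVertexGraph Λ).Reachable M M' := by
  obtain ⟨w, hwM, hvw⟩ := M.2.1.exists_adj_of_mem hv
  refine joinVertexGraph_reachable_of_subset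
    (isJoinSet_insert_of_subset_neighborSet (S := M.1 ∩ Λ.neighborSet v) ⟨w, hwM, hvw⟩
      Set.inter_subset_right)
    (Set.insert_subset hv Set.inter_subset_left) (hM'.trans' ?_)
  exact Set.insert_subset_insert Set.inter_subset_right

end JoinSets

/-- **Proposition (`|RI(S(Λ))|` is a connected simplicial complex).** -/
theorem RIS_connected_simplicial {V : Type} [Fintype V] (Λ : SimpleGraph V)
    (hconn : Λ.Connected) (hTF : Λ.CliqueFree 3) (hedge : ∃ v w : V, Λ.Adj v w) :
    -- simplicial: a collection of vertices spans at most one simplex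
    (∀ (s : Finset (Set V)) (W W' : Set V),
      RISCond Λ s W → RISCond Λ s W' → W = W') ∧
    -- connected
    (joinVertexGraph Λ).Connected := by
  refine ⟨fun s W W' h h' => h.unique hTF h', ?_⟩
  obtain ⟨a, b, hab⟩ := hedge
  have := hab.nontrivial
  choose star hstar using fun v =>
    (isJoinSet_insert_of_subset_neighborSet (hconn.preconnected.exists_adj_of_nontrivial v)
      (Set.Subset.refl (Λ.neighborSet v))).exists_maxJoinSets_superset
  have reach_star (M : {W : Set V // W ∈ maxJoinSets Λ}) {v : V} (hv : v ∈ M.1) :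
      (joinVertexGraph Λ).Reachable M (star v) :=
    joinVertexGraph_reachable_of_insert_neighborSet_subset hv (hstar v)
  have reach_stars (v w : V) : (joinVertexGraph Λ).Reachable (star v) (star w) :=
    (hconn.preconnected v w).map_of_adj star fun v w hvw =>
      reach_star (star v) (hstar v (Set.mem_insert_of_mem v hvw))
  have : Nonempty {W : Set V // W ∈ maxJoinSets Λ} := ⟨star a⟩
  refine ⟨fun M M' => ?_⟩
  obtain ⟨v, hv⟩ := M.2.1.nonempty
  obtain ⟨v', hv'⟩ := M'.2.1.nonempty
  exact ((reach_star M hv).trans (reach_stars v v')).trans (reach_star M' hv').symm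

end
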